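/- arXiv:math-ph/0607062 — 3 statements merged into one kernel-verified Lean document; each statement's English description precedes it below -/
import Mathlib

section
/- Let V be a module over a commutative ring with a basis indexed by pairs (n,k) of natural numbers, with basis elements B(n,k). Define a bilinear bracket on V by [B(n,k), B(N,K)] = (k*N - n*K) • B(n+N-1, k+K-1). Then this bracket is alternating (i.e. [x,x] = 0) and satisfies the Jacobi identity, so it defines a Lie algebra structure on V. -/
/-!
Both identities are multilinear, so it suffices to check them on basis vectors. Up to sign the
bracket is the Poisson bracket of the monomials `x ^ n * p ^ k`, and on basis vectors the Jacobi
identity becomes a polynomial identity in the exponents. The truncated subtractions in the indices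
are harmless: the coefficient `kN - nK` vanishes whenever `n + N = 0` or `k + K = 0`.
-/

namespace LinearMap

variable {ι R M N : Type*} [CommRing R] [AddCommGroup M] [Module R M] [AddCommGroup N] [Module R N]

theorem flip_eq_neg_of_basis (b : Module.Basis ι R M) {B : M →ₗ[R] M →ₗ[R] N}
    (hskew : ∀ i j, B (b i) (b j) + B (b j) (b i) = 0) : B.flip = -B :=
  ext_basis b b fun i j => eq_neg_of_add_eq_zero_left (hskew j i)

theorem apply_self_eq_zero_of_basis (b : Module.Basis ι R M) {B : M →ₗ[R] M →ₗ[R] N}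
    (hdiag : ∀ i, B (b i) (b i) = 0) (hskew : ∀ i j, B (b i) (b j) + B (b j) (b i) = 0)
    (x : M) : B x x = 0 := by
  have hflip (x y : M) : B y x = -B x y := congr($(flip_eq_neg_of_basis b hskew) x y)
  induction b.mem_span x using Submodule.span_induction with
  | mem x hx => obtain ⟨i, rfl⟩ := hx; exact hdiag i
  | zero => simp
  | add x y _ _ hx hy => simp [hx, hy, hflip x y]
  | smul r x _ hx => simp [hx]

def jacobiator (B : M →ₗ[R] M →ₗ[R] M) : M →ₗ[R] M →ₗ[R] M →ₗ[R] M :=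
  (llcomp R M M M ∘ₗ B).compl₂ B + B.compr₂ B.flip + ((llcomp R M M M ∘ₗ B).compl₂ B.flip).flip

@[simp]
theorem jacobiator_apply (B : M →ₗ[R] M →ₗ[R] M) (x y z : M) :
    jacobiator B x y z = B x (B y z) + B z (B x y) + B y (B z x) :=
  rfl

theorem jacobiator_eq_zero_of_basis (b : Module.Basis ι R M) {B : M →ₗ[R] M →ₗ[R] M}
    (h : ∀ i j k, B (b i) (B (b j) (b k)) + B (b k) (B (b i) (b j)) + B (b j) (B (b k) (b i)) = 0) :
    jacobiator B = 0 :=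
  b.ext fun i => ext_basis b b fun j k => by simpa using h i j k

end LinearMap

theorem one_le_add_of_mul_sub_mul_ne_zero {K M N L : ℕ} (h : (K * M - N * L : ℤ) ≠ 0) :
    1 ≤ N + M ∧ 1 ≤ K + L := by
  constructor <;> by_contra! h0
  · obtain ⟨rfl, rfl⟩ : N = 0 ∧ M = 0 := by omega
    simp at h
  · obtain ⟨rfl, rfl⟩ : K = 0 ∧ L = 0 := by omega
    simp at h

def IsRPQWNBracket {R : Type*} [CommRing R]
    (br : ((ℕ × ℕ) →₀ R) →ₗ[R] ((ℕ × ℕ) →₀ R) →ₗ[R] ((ℕ × ℕ) →₀ R)) : Prop :=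
  ∀ n k N K : ℕ, br (Finsupp.single (n, k) 1) (Finsupp.single (N, K) 1)
    = ((k * N : ℤ) - (n * K : ℤ)) • Finsupp.single (n + N - 1, k + K - 1) (1 : R)

namespace IsRPQWNBracket

open Finsupp

variable {R : Type*} [CommRing R] {br : ((ℕ × ℕ) →₀ R) →ₗ[R] ((ℕ × ℕ) →₀ R) →ₗ[R] ((ℕ × ℕ) →₀ R)}

theorem single_self (hbr : IsRPQWNBracket br) (a : ℕ × ℕ) :
    br (single a 1) (single a 1) = 0 := by
  obtain ⟨n, k⟩ := a
  rw [hbr, mul_comm (k : ℤ), sub_self, zero_smul]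

theorem single_add_single_swap (hbr : IsRPQWNBracket br) (a b : ℕ × ℕ) :
    br (single a 1) (single b 1) + br (single b 1) (single a 1) = 0 := by
  obtain ⟨n, k⟩ := a
  obtain ⟨N, K⟩ := b
  rw [hbr, hbr, add_comm N, add_comm K, ← add_smul]
  convert zero_smul ℤ _
  ring

theorem bracket_bracket_single (hbr : IsRPQWNBracket br) (n k N K M L : ℕ) :
    br (single (n, k) 1) (br (single (N, K) 1) (single (M, L) 1))
      = (((K : ℤ) * M - N * L) * (k * (N + M - 1) - n * (K + L - 1)))
          • single (n + N + M - 2, k + K + L - 2) (1 : R) := by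
  rw [hbr, map_zsmul, hbr, smul_smul]
  by_cases hc : (K * M - N * L : ℤ) = 0
  · simp [hc]
  obtain ⟨hNM, hKL⟩ := one_le_add_of_mul_sub_mul_ne_zero hc
  rw [Nat.cast_sub hNM, Nat.cast_sub hKL, show n + (N + M - 1) - 1 = n + N + M - 2 by omega,
    show k + (K + L - 1) - 1 = k + K + L - 2 by omega]
  push_cast
  rfl

theorem jacobi_single (hbr : IsRPQWNBracket br) (a b c : ℕ × ℕ) :
    br (single a 1) (br (single b 1) (single c 1)) + br (single c 1) (br (single a 1) (single b 1))
      + br (single b 1) (br (single c 1) (single a 1)) = 0 := by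
  obtain ⟨n, k⟩ := a
  obtain ⟨N, K⟩ := b
  obtain ⟨M, L⟩ := c
  rw [bracket_bracket_single hbr, bracket_bracket_single hbr, bracket_bracket_single hbr,
    show M + n + N = n + N + M by ring, show L + k + K = k + K + L by ring,
    show N + M + n = n + N + M by ring, show K + L + k = k + K + L by ring, ← add_smul, ← add_smul]
  convert zero_smul ℤ _
  ring

end IsRPQWNBracket

/-- The canonical RPQWN bracket `[B^n_k, B^N_K] = (kN - nK) B^{n+N-1}_{k+K-1}`,
extended bilinearly to the free module with basis indexed by pairs `(n,k)` of
natural numbers, is alternating and satisfies the Jacobi identity. -/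
theorem rpqwn_bracket_lie_algebra (R : Type*) [CommRing R]
    (br : ((ℕ × ℕ) →₀ R) →ₗ[R] ((ℕ × ℕ) →₀ R) →ₗ[R] ((ℕ × ℕ) →₀ R))
    (hbr : ∀ n k N K : ℕ,
      br (Finsupp.single (n, k) 1) (Finsupp.single (N, K) 1)
        = ((k * N : ℤ) - (n * K : ℤ)) • Finsupp.single (n + N - 1, k + K - 1) (1 : R)) :
    (∀ x, br x x = 0) ∧
    (∀ x y z, br x (br y z) + br z (br x y) + br y (br z x) = 0) := by
  have hjac : LinearMap.jacobiator br = 0 :=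
    LinearMap.jacobiator_eq_zero_of_basis Finsupp.basisSingleOne
      (by simpa using IsRPQWNBracket.jacobi_single hbr)
  refine ⟨LinearMap.apply_self_eq_zero_of_basis Finsupp.basisSingleOne ?_ ?_, fun x y z => ?_⟩
  · simpa using IsRPQWNBracket.single_self hbr
  · simpa using IsRPQWNBracket.single_add_single_swap hbr
  · simpa using congr($hjac x y z)
end

section
/- Let n ≥ 1 be a natural number, c > 0 and μ > 0 real numbers. Consider the symmetric 2×2 real matrix A with entries A₁₁ = (2n)! * c^(2n-1) * μ, A₁₂ = A₂₁ = (2n)! * c^(2n-2) * μ, and A₂₂ = 2*(n!)² * c^(2n-2) * μ² + ((2n)! - 2*(n!)²) * c^(2n-3) * μ. Then det A = 2 * c^(4(n-1)) * μ² * (n!)² * (2n)! * (c*μ - 1). Consequently, det A ≥ 0 if and only if μ ≥ 1/c. -/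
open Nat

/-- Determinant of the Gram matrix arising in the no-go counter-example, and the
positivity criterion `μ ≥ 1/c`. -/
theorem gram_matrix_det (n : ℕ) (hn : 1 ≤ n) (c μ : ℝ) (hc : 0 < c) (hμ : 0 < μ) :
    let A : Matrix (Fin 2) (Fin 2) ℝ :=
      !![((2*n)! : ℝ) * c ^ (2*(n:ℤ) - 1) * μ, ((2*n)! : ℝ) * c ^ (2*(n:ℤ) - 2) * μ;
         ((2*n)! : ℝ) * c ^ (2*(n:ℤ) - 2) * μ,
         2 * ((n ! : ℝ))^2 * c ^ (2*(n:ℤ) - 2) * μ^2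
           + (((2*n)! : ℝ) - 2 * ((n ! : ℝ))^2) * c ^ (2*(n:ℤ) - 3) * μ]
    A.det = 2 * c ^ (4*((n:ℤ) - 1)) * μ^2 * ((n ! : ℝ))^2 * ((2*n)! : ℝ) * (c*μ - 1) ∧
      (0 ≤ A.det ↔ 1/c ≤ μ) := by
  intro A
  have hc0 : c ≠ 0 := ne_of_gt hc
  have h1 : (2*(n:ℤ) - 1) = (2*(n:ℤ) - 3) + 2 := by ring
  have h2 : (2*(n:ℤ) - 2) = (2*(n:ℤ) - 3) + 1 := by ring
  have h3 : (4*((n:ℤ) - 1)) = ((2*(n:ℤ) - 3) + (2*(n:ℤ) - 3)) + 2 := by ring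
  have hdet : A.det = 2 * c ^ (4*((n:ℤ) - 1)) * μ^2 * ((n ! : ℝ))^2 * ((2*n)! : ℝ) * (c*μ - 1) := by
    show (!![((2*n)! : ℝ) * c ^ (2*(n:ℤ) - 1) * μ, ((2*n)! : ℝ) * c ^ (2*(n:ℤ) - 2) * μ;
         ((2*n)! : ℝ) * c ^ (2*(n:ℤ) - 2) * μ,
         2 * ((n ! : ℝ))^2 * c ^ (2*(n:ℤ) - 2) * μ^2
           + (((2*n)! : ℝ) - 2 * ((n ! : ℝ))^2) * c ^ (2*(n:ℤ) - 3) * μ] : Matrix (Fin 2) (Fin 2) ℝ).det = _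
    rw [Matrix.det_fin_two_of, h1, h2, h3]
    simp only [zpow_add₀ hc0, zpow_one, zpow_two]
    ring
  refine ⟨hdet, ?_⟩
  rw [hdet]
  have hfac1 : (0:ℝ) < ((n ! : ℝ))^2 := by positivity
  have hfac2 : (0:ℝ) < ((2*n)! : ℝ) := by exact_mod_cast Nat.factorial_pos _
  have hK : (0:ℝ) < 2 * c ^ (4*((n:ℤ) - 1)) * μ^2 * ((n ! : ℝ))^2 * ((2*n)! : ℝ) := by
    have := zpow_pos hc (4*((n:ℤ) - 1))
    positivity
  rw [mul_nonneg_iff_of_pos_left hK, sub_nonneg, ← div_le_iff₀' hc]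
end

section
/- In a Banach algebra (or an algebra where the exponential series converge, e.g. for elements of a Weyl algebra represented suitably), suppose D, x, h satisfy [D,x] = h·1 with h a scalar. Then for all scalars s, a: exp(sD) * exp(ax) = exp(ax) * exp(sD) * exp(a*s*h). -/
/-!
If `⁅D, x⁆ = k` with `k` commuting with `D`, then
`D ^ (n + 1) * x = x * D ^ (n + 1) + (n + 1) • k * D ^ n`, and summing the exponential series gives
`exp D * x = (x + k) * exp D`. Conjugation by `exp D` is a continuous ring map, so it carries
`exp x` to `exp (x + k)`; when `k` is a scalar this equals `exp k • exp x`.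
The theorem is the case `D ↦ s • D`, `x ↦ a • x`, `k = (a * s * h) • 1`.
-/

open NormedSpace

open scoped Nat

theorem pow_succ_mul_of_lie_eq {R : Type*} [Ring R] {D x k : R} (hk : ⁅D, x⁆ = k)
    (hDk : Commute D k) (n : ℕ) :
    D ^ (n + 1) * x = x * D ^ (n + 1) + (n + 1) • (k * D ^ n) := by
  rw [Ring.lie_def, sub_eq_iff_eq_add'] at hk
  induction n with
  | zero => simp [hk]
  | succ n ih =>
    calc D ^ (n + 1 + 1) * x = D * (D ^ (n + 1) * x) := by rw [pow_succ' D (n + 1), mul_assoc]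
      _ = (x * D + k) * D ^ (n + 1) + (n + 1) • (k * D ^ (n + 1)) := by
        rw [ih, mul_add, ← mul_assoc, hk, mul_smul_comm, ← mul_assoc, hDk.eq, mul_assoc,
          ← pow_succ']
      _ = x * D ^ (n + 1 + 1) + (n + 1 + 1) • (k * D ^ (n + 1)) := by
        rw [add_mul, mul_assoc, ← pow_succ', succ_nsmul _ (n + 1)]
        abel

theorem exp_mul_of_lie_eq {𝔸 : Type*} [NormedRing 𝔸] [NormedAlgebra ℚ 𝔸] [CompleteSpace 𝔸]
    {D x k : 𝔸} (hk : ⁅D, x⁆ = k) (hDk : Commute D k) :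
    exp D * x = (x + k) * exp D := by
  set e : ℕ → 𝔸 := fun n => (n !⁻¹ : ℚ) • D ^ n
  have he : HasSum e (exp D) := exp_series_hasSum_exp' D
  have hterm : (fun n => e (n + 1) * x) = fun n => x * e (n + 1) + k * e n := by
    funext n
    have hfact : ((n + 1)! : ℚ)⁻¹ * (n + 1 : ℕ) = (n ! : ℚ)⁻¹ := by
      rw [Nat.factorial_succ, Nat.cast_mul, mul_inv_rev, inv_mul_cancel_right₀ (by positivity)]
    simp only [e, smul_mul_assoc, pow_succ_mul_of_lie_eq hk hDk, smul_add, mul_smul_comm,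
      ← Nat.cast_smul_eq_nsmul ℚ, smul_smul, hfact]
  have hsum : HasSum (fun n => e n * x) ((x + k) * exp D) := by
    have he0 : e 0 = 1 := by simp [e]
    have hval : (x + k) * exp D - e 0 * x = x * (exp D - e 0) + k * exp D := by
      rw [he0]; noncomm_ring
    have htail : HasSum (fun n => e (n + 1)) (exp D - e 0) := by
      simpa only [Finset.sum_range_one] using (hasSum_nat_add_iff' 1).2 he
    rw [← hasSum_nat_add_iff' 1, hterm, Finset.sum_range_one, hval]
    exact (htail.mul_left x).add (he.mul_left k)
  exact (he.mul_right x).unique hsum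

theorem exp_mul_exp_of_lie_eq_algebraMap {𝕂 𝔸 : Type*} [RCLike 𝕂] [NormedRing 𝔸]
    [NormedAlgebra 𝕂 𝔸] [CompleteSpace 𝔸] {D x : 𝔸} {c : 𝕂} (hc : ⁅D, x⁆ = algebraMap 𝕂 𝔸 c) :
    exp D * exp x = exp c • (exp x * exp D) := by
  -- `exp` is defined through whichever `ℚ`-algebra structure exists; they all agree.
  let : NormedAlgebra ℚ 𝔸 := .restrictScalars ℚ 𝕂 𝔸
  have hsemiconj : SemiconjBy (exp D) x (x + algebraMap 𝕂 𝔸 c) :=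
    exp_mul_of_lie_eq hc (Algebra.commutes c D).symm
  rw [hsemiconj.exp_right.eq, exp_add_of_commute (Algebra.commutes c x).symm,
    ← algebraMap_exp_comm, ← Algebra.commutes, Algebra.smul_def, mul_assoc]

/-- Weyl relation: if `[D,x] = h•1` with `h` a scalar, then
`e^{sD} e^{ax} = e^{ash} e^{ax} e^{sD}`. -/
theorem weyl_relation {A : Type*} [NormedRing A] [NormedAlgebra ℂ A] [CompleteSpace A]
    (D x : A) (h : ℂ) (hDx : D * x - x * D = h • (1 : A)) (s a : ℂ) :
    exp (s • D) * exp (a • x)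
      = Complex.exp (a * s * h) • (exp (a • x) * exp (s • D)) := by
  have hc : ⁅s • D, a • x⁆ = algebraMap ℂ A (a * s * h) := by
    rw [Ring.lie_def, smul_mul_smul_comm, smul_mul_smul_comm, mul_comm s a, ← smul_sub, hDx,
      smul_smul, Algebra.algebraMap_eq_smul_one]
  rw [exp_mul_exp_of_lie_eq_algebraMap hc, Complex.exp_eq_exp_ℂ]
end
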